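/- Adding the same number of copies of the same value to two anonymized histograms leaves their sorted ℓ1 distance unchanged: for any histograms h1, h2, any positive integer t, and any k ∈ ℕ, ℓ1(h1 + k·{t}, h2 + k·{t}) = ℓ1(h1, h2), where h + k·{t} denotes the multiset obtained from h by adding k copies of t. -/

import Mathlib

/-- The `i`-th largest element (0-indexed) of a finite multiset of naturals,
taken to be `0` when `i` exceeds the number of elements. -/
def nthLargest (h : Multiset ℕ) (i : ℕ) : ℕ :=
  ((h.sort (· ≤ ·)).reverse).getD i 0

/-- The sorted ℓ1 distance `Σ_{i≥1} |n_(i)(h1) − n_(i)(h2)|` between two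
anonymized histograms.  All terms with `i ≥ h1.card + h2.card` vanish, so the
finite sum below equals the infinite sum. -/
def sortedL1 (h1 h2 : Multiset ℕ) : ℕ :=
  ∑ i ∈ Finset.range (h1.card + h2.card),
    ((nthLargest h1 i : ℤ) - (nthLargest h2 i : ℤ)).natAbs

/-! Layer-cake formula: `s < n_(i)(h)` holds exactly for the indices `i` below the number of
elements of `h` exceeding `s`, so writing each `|n_(i)(h1) - n_(i)(h2)|` as a sum over thresholds
and swapping the sums gives `ℓ1(h1, h2) = Σ_s |#{a ∈ h1 | s < a} - #{a ∈ h2 | s < a}|`.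
Adding `k` copies of `t` raises both counts by the same amount at every threshold. -/

open Finset

theorem List.lt_getD_zero_iff_lt_countP {l : List ℕ} (hl : l.Pairwise (· ≥ ·)) (s i : ℕ) :
    s < l.getD i 0 ↔ i < l.countP (s < ·) := by
  induction l generalizing i with
  | nil => simp
  | cons x xs ih =>
    obtain ⟨hx, hxs⟩ := List.pairwise_cons.1 hl
    by_cases hsx : s < x
    · rcases i with _ | i
      · simp [hsx]
      · rw [List.getD_cons_succ, ih hxs]
        simp [hsx]
    · have hzero : xs.countP (s < ·) = 0 :=
        List.countP_eq_zero.2 fun a ha => by simpa using (hx a ha).trans (not_lt.1 hsx)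
      rcases i with _ | i
      · simp [hsx, hzero]
      · rw [List.getD_cons_succ, ih hxs]
        simp [hsx, hzero]

theorem lt_nthLargest_iff (h : Multiset ℕ) (s i : ℕ) :
    s < nthLargest h i ↔ i < h.countP (s < ·) := by
  have hsorted : ((h.sort (· ≤ ·)).reverse).Pairwise (· ≥ ·) :=
    List.pairwise_reverse.2 (Multiset.pairwise_sort h _)
  rw [nthLargest, List.lt_getD_zero_iff_lt_countP hsorted, List.countP_reverse,
    ← Multiset.coe_countP, Multiset.sort_eq]

theorem nthLargest_le {h : Multiset ℕ} {M : ℕ} (hM : ∀ a ∈ h, a ≤ M) (i : ℕ) :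
    nthLargest h i ≤ M := by
  have hzero : h.countP (M < ·) = 0 := Multiset.countP_eq_zero.2 fun a ha => (hM a ha).not_gt
  simpa [hzero] using (lt_nthLargest_iff h M i).not

theorem natAbs_sub_eq_sum_range {A B N : ℕ} (hA : A ≤ N) (hB : B ≤ N) :
    ((A : ℤ) - B).natAbs =
      ∑ i ∈ range N, ((if i < A then 1 else 0 : ℤ) - if i < B then 1 else 0).natAbs := by
  have hterm (i : ℕ) :
      ((if i < A then 1 else 0 : ℤ) - if i < B then 1 else 0).natAbs =
        if i ∈ Ico (min A B) (max A B) then 1 else 0 := by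
    simp only [mem_Ico]
    split_ifs <;> omega
  rw [sum_congr rfl fun i _ => hterm i, sum_ite_mem,
    inter_eq_right.2 fun i hi => mem_range.2 ((mem_Ico.1 hi).2.trans_le (max_le hA hB)),
    sum_const, Nat.card_Ico, smul_eq_mul, mul_one]
  omega

theorem sortedL1_eq_sum_countP {h1 h2 : Multiset ℕ} {M : ℕ}
    (hM1 : ∀ a ∈ h1, a ≤ M) (hM2 : ∀ a ∈ h2, a ≤ M) :
    sortedL1 h1 h2 =
      ∑ s ∈ range M, ((h1.countP (s < ·) : ℤ) - h2.countP (s < ·)).natAbs := by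
  have hcard1 (s : ℕ) : h1.countP (s < ·) ≤ h1.card + h2.card :=
    (Multiset.countP_le_card _ _).trans (Nat.le_add_right _ _)
  have hcard2 (s : ℕ) : h2.countP (s < ·) ≤ h1.card + h2.card :=
    (Multiset.countP_le_card _ _).trans (Nat.le_add_left _ _)
  calc sortedL1 h1 h2
      = ∑ i ∈ range (h1.card + h2.card), ∑ s ∈ range M,
          ((if s < nthLargest h1 i then 1 else 0 : ℤ) -
            if s < nthLargest h2 i then 1 else 0).natAbs :=
        sum_congr rfl fun i _ =>
          natAbs_sub_eq_sum_range (nthLargest_le hM1 i) (nthLargest_le hM2 i)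
    _ = ∑ s ∈ range M, ∑ i ∈ range (h1.card + h2.card),
          ((if i < h1.countP (s < ·) then 1 else 0 : ℤ) -
            if i < h2.countP (s < ·) then 1 else 0).natAbs := by
        rw [sum_comm]
        simp only [lt_nthLargest_iff]
    _ = _ := sum_congr rfl fun s _ =>
        (natAbs_sub_eq_sum_range (hcard1 s) (hcard2 s)).symm

theorem sortedL1_add_replicate_general (h1 h2 : Multiset ℕ) (t : ℕ) (k : ℕ) :
    sortedL1 (h1 + Multiset.replicate k t) (h2 + Multiset.replicate k t) =
      sortedL1 h1 h2 := by
  set M := (h1 + h2 + Multiset.replicate k t).sup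
  rw [sortedL1_eq_sum_countP (M := M), sortedL1_eq_sum_countP (M := M)]
  · simp only [Multiset.countP_add, Nat.cast_add, add_sub_add_right_eq_sub]
  all_goals
    intro a ha
    apply Multiset.le_sup
    simp only [Multiset.mem_add] at ha ⊢
    tauto

/-- Adding `k` copies of the same value `t` to two histograms leaves their
sorted ℓ1 distance unchanged. -/
theorem sortedL1_add_replicate (h1 h2 : Multiset ℕ) (t : ℕ) (ht : 0 < t) (k : ℕ)
    (hp1 : ∀ a ∈ h1, 0 < a) (hp2 : ∀ a ∈ h2, 0 < a) :
    sortedL1 (h1 + Multiset.replicate k t) (h2 + Multiset.replicate k t) =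
      sortedL1 h1 h2 :=
  sortedL1_add_replicate_general h1 h2 t k
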